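/- arXiv:1511.05529 — 6 statements merged into one kernel-verified Lean document; each statement's English description precedes it below -/
import Mathlib

section
/- Let α > 0 and ω ∈ ℂ \ [π²/α², ∞). The meromorphic function m_ω(ξ) = 1/α + Σ_{k=1}^∞ 2α(ξ² − ω)/(α²(ξ² − ω) + k²π²) has residue at ξ = ±i√(π²/α² − ω) equal to ±(π²/α³)·i/√(π²/α² − ω). -/
/-!
Write `z₀ = i√(π²/α² − ω)`, so that `α²(z₀² − ω) + π² = 0`. Of the summands
`2α(z² − ω)/(α²(z² − ω) + k²π²)` only the one with `k = 1` vanishes in its denominator at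
`±z₀`; as a quotient `f/g` with a simple zero of `g` it has residue
`f(z₀)/g'(z₀) = −π²/(α³z₀)`. Near `z₀` we have `‖α²(z² − ω)‖ ≤ 2π²`, and then the summands
with `k ≥ 2` are at most `8/(αk²)`, so the rest of `m_ω` stays bounded and is killed by the
factor `z − z₀`. The same computation at `−z₀`, which solves the same equation, gives the opposite
residue.
-/

open Complex Filter Topology

/-- The branch of the square root holomorphic on `ℂ \ (-∞,0]`, positive on `(0,∞)`,
with nonnegative imaginary part on `(-∞,0]`. -/
noncomputable def csqrt (z : ℂ) : ℂ := z ^ ((1 : ℂ) / 2)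

/-- The meromorphic function `m_ω` given by its partial fraction series. -/
noncomputable def mSeries (α : ℝ) (ω : ℂ) (z : ℂ) : ℂ :=
  1 / (α : ℂ) + ∑' k : ℕ,
    2 * (α : ℂ) * (z ^ 2 - ω) /
      ((α : ℂ) ^ 2 * (z ^ 2 - ω) + ((k : ℂ) + 1) ^ 2 * (Real.pi : ℂ) ^ 2)

open scoped Real

theorem tendsto_sub_mul_div_of_hasDerivAt {𝕜 : Type*} [NontriviallyNormedField 𝕜]
    {f g : 𝕜 → 𝕜} {z₀ g' : 𝕜} (hf : ContinuousAt f z₀) (hg : HasDerivAt g g' z₀)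
    (hg₀ : g z₀ = 0) (hg' : g' ≠ 0) :
    Tendsto (fun z => (z - z₀) * (f z / g z)) (𝓝[≠] z₀) (𝓝 (f z₀ / g')) := by
  refine ((hf.tendsto.mono_left nhdsWithin_le_nhds).div
    (hasDerivAt_iff_tendsto_slope.mp hg) hg').congr fun z => ?_
  rw [Pi.div_apply, slope_def_field, hg₀, sub_zero, div_div_eq_mul_div]
  ring

noncomputable def mTerm (α : ℝ) (w : ℂ) (k : ℕ) : ℂ :=
  2 * α * w / (α ^ 2 * w + ((k : ℂ) + 1) ^ 2 * π ^ 2)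

theorem mSeries_eq (α : ℝ) (ω z : ℂ) :
    mSeries α ω z = 1 / α + ∑' k, mTerm α (z ^ 2 - ω) k := rfl

theorem norm_mTerm_succ_le {α : ℝ} (hα : 0 < α) {w : ℂ} (hw : ‖(α : ℂ) ^ 2 * w‖ ≤ 2 * π ^ 2)
    (k : ℕ) : ‖mTerm α w (k + 1)‖ ≤ 8 / α / ((k : ℝ) + 1) ^ 2 := by
  have hn : 4 ≤ ((k : ℝ) + 2) ^ 2 := by nlinarith [k.cast_nonneg (α := ℝ)]
  have hk : (((k + 1 : ℕ) : ℂ) + 1) ^ 2 * π ^ 2 = (((k + 2) ^ 2 * π ^ 2 : ℝ) : ℂ) := by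
    push_cast; ring
  have hden : ((k : ℝ) + 2) ^ 2 * π ^ 2 / 2 ≤
      ‖(α : ℂ) ^ 2 * w + (((k + 1 : ℕ) : ℂ) + 1) ^ 2 * π ^ 2‖ := by
    have := norm_sub_le ((α : ℂ) ^ 2 * w + (((k + 1 : ℕ) : ℂ) + 1) ^ 2 * π ^ 2) ((α : ℂ) ^ 2 * w)
    rw [add_sub_cancel_left, hk, norm_real, Real.norm_of_nonneg (by positivity)] at this
    rw [hk]
    nlinarith [mul_le_mul_of_nonneg_right hn (sq_nonneg π)]
  have hnum : ‖2 * (α : ℂ) * w‖ ≤ 4 * π ^ 2 / α := by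
    rw [norm_mul, norm_pow, norm_real, Real.norm_of_nonneg hα.le] at hw
    rw [norm_mul, norm_mul, norm_real, Real.norm_of_nonneg hα.le, le_div_iff₀ hα]
    norm_num
    nlinarith
  calc ‖mTerm α w (k + 1)‖ ≤ (4 * π ^ 2 / α) / (((k : ℝ) + 2) ^ 2 * π ^ 2 / 2) := by
        rw [mTerm, norm_div]
        exact div_le_div₀ (by positivity) hnum (by positivity) hden
    _ = 8 / α / ((k : ℝ) + 2) ^ 2 := by field_simp; ring
    _ ≤ 8 / α / ((k : ℝ) + 1) ^ 2 := by gcongr; linarith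

theorem summable_div_nat_succ_sq (c : ℝ) : Summable fun k : ℕ => c / ((k : ℝ) + 1) ^ 2 := by
  have := (summable_nat_add_iff 1).mpr (Real.summable_one_div_nat_pow.mpr one_lt_two)
  simpa [div_eq_mul_inv] using this.mul_left c

theorem norm_tsum_mTerm_succ_le {α : ℝ} (hα : 0 < α) {w : ℂ}
    (hw : ‖(α : ℂ) ^ 2 * w‖ ≤ 2 * π ^ 2) :
    ‖∑' k, mTerm α w (k + 1)‖ ≤ ∑' k : ℕ, 8 / α / ((k : ℝ) + 1) ^ 2 :=
  tsum_of_norm_bounded (summable_div_nat_succ_sq _).hasSum (norm_mTerm_succ_le hα hw)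

theorem mSeries_eq_of_norm_le {α : ℝ} (hα : 0 < α) {ω z : ℂ}
    (hz : ‖(α : ℂ) ^ 2 * (z ^ 2 - ω)‖ ≤ 2 * π ^ 2) :
    mSeries α ω z = 1 / α + mTerm α (z ^ 2 - ω) 0 + ∑' k, mTerm α (z ^ 2 - ω) (k + 1) := by
  rw [mSeries_eq, tsum_eq_zero_add'
    ((summable_div_nat_succ_sq _).of_norm_bounded (norm_mTerm_succ_le hα hz)), add_assoc]

theorem tendsto_sub_mul_mSeries {α : ℝ} (hα : 0 < α) {ω z₀ : ℂ} (hz₀ : z₀ ≠ 0)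
    (hpole : (α : ℂ) ^ 2 * (z₀ ^ 2 - ω) + π ^ 2 = 0) :
    Tendsto (fun z => (z - z₀) * mSeries α ω z) (𝓝[≠] z₀) (𝓝 (-π ^ 2 / (α ^ 3 * z₀))) := by
  have hnear : ∀ᶠ z in 𝓝[≠] z₀, ‖(α : ℂ) ^ 2 * (z ^ 2 - ω)‖ ≤ 2 * π ^ 2 := by
    have hcont : ContinuousAt (fun z : ℂ => ‖(α : ℂ) ^ 2 * (z ^ 2 - ω)‖) z₀ := by fun_prop
    have hval : ‖(α : ℂ) ^ 2 * (z₀ ^ 2 - ω)‖ < 2 * π ^ 2 := by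
      rw [eq_neg_of_add_eq_zero_left hpole, norm_neg, ← ofReal_pow, norm_real,
        Real.norm_of_nonneg (sq_nonneg π)]
      linarith [pow_pos Real.pi_pos 2]
    exact (hcont.eventually_lt continuousAt_const hval).filter_mono nhdsWithin_le_nhds
      |>.mono fun z hz => hz.le
  have hregular : Tendsto (fun z => (z - z₀) * (1 / α + ∑' k, mTerm α (z ^ 2 - ω) (k + 1)))
      (𝓝[≠] z₀) (𝓝 0) := by
    have hsub : Tendsto (fun z => z - z₀) (𝓝[≠] z₀) (𝓝 0) :=
      tendsto_sub_nhds_zero_iff.mpr nhdsWithin_le_nhds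
    refine hsub.zero_mul_isBoundedUnder_le
      ⟨1 / α + ∑' k : ℕ, 8 / α / ((k : ℝ) + 1) ^ 2, eventually_map.mpr ?_⟩
    filter_upwards [hnear] with z hz
    refine (norm_add_le _ _).trans (add_le_add ?_ (norm_tsum_mTerm_succ_le hα hz))
    simp [abs_of_pos hα]
  have hpolar : Tendsto (fun z => (z - z₀) * mTerm α (z ^ 2 - ω) 0) (𝓝[≠] z₀)
      (𝓝 (-π ^ 2 / (α ^ 3 * z₀))) := by
    have hα' : (α : ℂ) ≠ 0 := ofReal_ne_zero.mpr hα.ne'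
    have hg : HasDerivAt (fun z : ℂ => α ^ 2 * (z ^ 2 - ω) + (((0 : ℕ) : ℂ) + 1) ^ 2 * π ^ 2)
        (α ^ 2 * (2 * z₀)) z₀ := by
      simpa using (((hasDerivAt_pow 2 z₀).sub_const ω).const_mul ((α : ℂ) ^ 2)).add_const
        ((π : ℂ) ^ 2)
    have hres : 2 * α * (z₀ ^ 2 - ω) / (α ^ 2 * (2 * z₀)) = -π ^ 2 / (α ^ 3 * z₀) := by
      field_simp
      linear_combination hpole
    rw [← hres]
    exact tendsto_sub_mul_div_of_hasDerivAt (f := fun z => 2 * α * (z ^ 2 - ω))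
      (by fun_prop) hg (by simpa using hpole) (by simp [hα', hz₀])
  refine zero_add (-π ^ 2 / (α ^ 3 * z₀)) ▸ (hregular.add hpolar).congr' ?_
  filter_upwards [hnear] with z hz
  rw [mSeries_eq_of_norm_le hα hz]
  ring

theorem csqrt_sq (z : ℂ) : csqrt z ^ 2 = z := by
  simp [csqrt]

/-- The residue of `m_ω` at `ξ = ± i √(π²/α² - ω)` equals `± (π²/α³)·i/√(π²/α²-ω)`. -/
theorem residue_of_m (α : ℝ) (hα : 0 < α) (ω : ℂ)
    (hω : ω ∉ {z : ℂ | z.im = 0 ∧ (Real.pi ^ 2 / α ^ 2 : ℝ) ≤ z.re}) :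
    Tendsto (fun z : ℂ =>
        (z - Complex.I * csqrt (((Real.pi ^ 2 / α ^ 2 : ℝ) : ℂ) - ω)) * mSeries α ω z)
      (𝓝[≠] (Complex.I * csqrt (((Real.pi ^ 2 / α ^ 2 : ℝ) : ℂ) - ω)))
      (𝓝 (((Real.pi ^ 2 / α ^ 3 : ℝ) : ℂ) * Complex.I /
        csqrt (((Real.pi ^ 2 / α ^ 2 : ℝ) : ℂ) - ω))) ∧
    Tendsto (fun z : ℂ =>
        (z - -(Complex.I * csqrt (((Real.pi ^ 2 / α ^ 2 : ℝ) : ℂ) - ω))) * mSeries α ω z)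
      (𝓝[≠] (-(Complex.I * csqrt (((Real.pi ^ 2 / α ^ 2 : ℝ) : ℂ) - ω))))
      (𝓝 (-(((Real.pi ^ 2 / α ^ 3 : ℝ) : ℂ) * Complex.I /
        csqrt (((Real.pi ^ 2 / α ^ 2 : ℝ) : ℂ) - ω)))) := by
  set s := csqrt (((π ^ 2 / α ^ 2 : ℝ) : ℂ) - ω)
  have hs2 : s ^ 2 = ((π ^ 2 / α ^ 2 : ℝ) : ℂ) - ω := csqrt_sq _
  have hs : s ≠ 0 := by
    intro h
    have hω' : ω = ((π ^ 2 / α ^ 2 : ℝ) : ℂ) := by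
      rw [h] at hs2
      linear_combination hs2
    exact hω ⟨by rw [hω', ofReal_im], by rw [hω', ofReal_re]⟩
  have hz₀ : I * s ≠ 0 := mul_ne_zero I_ne_zero hs
  have hα' : (α : ℂ) ≠ 0 := ofReal_ne_zero.mpr hα.ne'
  have hpole : (α : ℂ) ^ 2 * ((I * s) ^ 2 - ω) + π ^ 2 = 0 := by
    rw [mul_pow, I_sq, hs2]
    push_cast
    field_simp
    ring
  have hres : -π ^ 2 / (α ^ 3 * (I * s)) = ((π ^ 2 / α ^ 3 : ℝ) : ℂ) * I / s := by
    push_cast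
    field_simp
    linear_combination -I_sq
  refine ⟨hres ▸ tendsto_sub_mul_mSeries hα hz₀ hpole, ?_⟩
  have := tendsto_sub_mul_mSeries hα (neg_ne_zero.mpr hz₀) (by rwa [neg_sq])
  rwa [mul_neg, div_neg, hres] at this
end

section
/- For fixed ξ ∈ ℝ and α > 0, the function ω ↦ m_ω(ξ) = 1/α + Σ_{k=1}^∞ 2α/(α² + k²π²/(ξ² − ω)) is strictly decreasing in ω on (−∞, ξ² ) ∪ (ξ², ∞) intersected with (−∞, π²/α²); in particular, for ω₁ < ω₂ < π²/α² one has m_{ω₁}(ξ) > m_{ω₂}(ξ) for every ξ ∈ ℝ. -/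
/-!
Writing `x = ξ² - ω` and `c = (k+1)²π²`, the `k`-th term is `2α · x / (α²x + c)`. As long as the
denominator is positive, `x ↦ x / (α²x + c)` is strictly increasing (its derivative is
`c / (α²x + c)² > 0`), so every term strictly decreases in `ω`. The hypothesis `ω < π²/α²` makes
all denominators positive and bounds them below by a multiple of `(k+1)²`, which gives summability,
and strict termwise comparison of summable series is strict for the sums.
-/

lemma div_mul_add_lt_div_mul_add {b c x y : ℝ} (hc : 0 < c) (hx : 0 < b * x + c)
    (hy : 0 < b * y + c) (hxy : x < y) : x / (b * x + c) < y / (b * y + c) := by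
  rw [div_lt_div_iff₀ hx hy]
  nlinarith

lemma mul_min_le_add_mul {a p n : ℝ} (hn : 1 ≤ n) :
    n * min p (a + p) ≤ a + n * p := by
  rcases le_or_gt 0 a with ha | ha
  · nlinarith [min_le_left p (a + p)]
  · nlinarith [min_le_right p (a + p)]

lemma succ_sq_mul_min_le (a p : ℝ) (k : ℕ) :
    ((k : ℝ) + 1) ^ 2 * min p (a + p) ≤ a + ((k : ℝ) + 1) ^ 2 * p :=
  mul_min_le_add_mul (by nlinarith [k.cast_nonneg (α := ℝ)])

lemma add_succ_sq_mul_pos {a p : ℝ} (hp : 0 < p) (h : 0 < a + p) (k : ℕ) :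
    0 < a + ((k : ℝ) + 1) ^ 2 * p :=
  (mul_pos (by positivity) (lt_min hp h)).trans_le (succ_sq_mul_min_le a p k)

lemma summable_div_add_succ_sq_mul (C : ℝ) {a p : ℝ} (hp : 0 < p) (h : 0 < a + p) :
    Summable fun k : ℕ => C / (a + ((k : ℝ) + 1) ^ 2 * p) := by
  set δ := min p (a + p)
  have hδ : 0 < δ := lt_min hp h
  have hsq : Summable fun k : ℕ => 1 / ((k : ℝ) + 1) ^ 2 := by
    simpa using (summable_nat_add_iff 1).mpr (Real.summable_one_div_nat_pow.mpr one_lt_two)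
  refine .of_norm_bounded (hsq.mul_left (|C| / δ)) fun k => ?_
  have hk : 0 < ((k : ℝ) + 1) ^ 2 := by positivity
  rw [norm_div, Real.norm_eq_abs, Real.norm_of_nonneg (add_succ_sq_mul_pos hp h k).le,
    div_mul_div_comm, mul_one, mul_comm δ]
  exact div_le_div_of_nonneg_left (abs_nonneg C) (by positivity) (succ_sq_mul_min_le a p k)

/-- For fixed `ξ ∈ ℝ`, `ω ↦ m_ω(ξ)` (via the partial fraction series) is strictly
decreasing: for `ω₁ < ω₂ < π²/α²`, `m_{ω₁}(ξ) > m_{ω₂}(ξ)`. -/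
theorem m_strictly_decreasing_in_omega (α : ℝ) (hα : 0 < α) (ω₁ ω₂ : ℝ)
    (h12 : ω₁ < ω₂) (h2 : ω₂ < Real.pi ^ 2 / α ^ 2) (ξ : ℝ) :
    1 / α + ∑' k : ℕ,
        2 * α * (ξ ^ 2 - ω₂) / (α ^ 2 * (ξ ^ 2 - ω₂) + ((k : ℝ) + 1) ^ 2 * Real.pi ^ 2)
      < 1 / α + ∑' k : ℕ,
        2 * α * (ξ ^ 2 - ω₁) / (α ^ 2 * (ξ ^ 2 - ω₁) + ((k : ℝ) + 1) ^ 2 * Real.pi ^ 2) := by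
  have hπ : 0 < Real.pi ^ 2 := by positivity
  have hαω₂ : ω₂ * α ^ 2 < Real.pi ^ 2 := (lt_div_iff₀ (by positivity)).mp h2
  have hd₂ : 0 < α ^ 2 * (ξ ^ 2 - ω₂) + Real.pi ^ 2 := by nlinarith [sq_nonneg (α * ξ)]
  have hd₁ : 0 < α ^ 2 * (ξ ^ 2 - ω₁) + Real.pi ^ 2 := by nlinarith [sq_nonneg α]
  have hterm : ∀ k : ℕ,
      2 * α * (ξ ^ 2 - ω₂) / (α ^ 2 * (ξ ^ 2 - ω₂) + ((k : ℝ) + 1) ^ 2 * Real.pi ^ 2)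
        < 2 * α * (ξ ^ 2 - ω₁) / (α ^ 2 * (ξ ^ 2 - ω₁) + ((k : ℝ) + 1) ^ 2 * Real.pi ^ 2) := by
    intro k
    simp only [mul_div_assoc]
    exact mul_lt_mul_of_pos_left (div_mul_add_lt_div_mul_add (by positivity)
      (add_succ_sq_mul_pos hπ hd₂ k) (add_succ_sq_mul_pos hπ hd₁ k) (by linarith)) (by positivity)
  gcongr 1 / α + ?_
  exact Summable.tsum_lt_tsum (fun k => (hterm k).le) (hterm 0)
    (summable_div_add_succ_sq_mul _ hπ hd₂) (summable_div_add_succ_sq_mul _ hπ hd₁)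
end

section
/- For x ∈ (−1,1), the principal value integral p.v. ∫_{−1}^1 √(1−y²)/(x−y) dy equals πx. -/
/-!
On `[-1, 1] \ {x}` the integrand has the explicit primitive
`F y = x arcsin y - √(1 - y²) + √(1 - x²) (log (1 - x y + √(1 - x²) √(1 - y²)) - log (x - y))`
(Mathlib's `log` is `log |·|` on negative arguments, so one formula serves both sides of `x`).
Hence the truncated integral is `F 1 - F (-1) + (F (x - ε) - F (x + ε)) = π x + (F (x - ε) - F (x + ε))`.
The only singular part of `F` at `x` is `-√(1 - x²) log |x - y|`, which is even about `x` and
cancels in `F (x - ε) - F (x + ε)`; the rest of `F` is continuous at `x`, so the difference tends to `0`.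
-/

open Filter Topology MeasureTheory
open Real Set

section PrincipalValue

variable {f F : ℝ → ℝ} {a b x : ℝ}

theorem setOf_mem_Ioo_and_le_abs_sub {ε : ℝ} (hax : a < x) (hxb : x < b) (hε : 0 ≤ ε) :
    {y | y ∈ Ioo a b ∧ ε ≤ |x - y|} = Ioc a (x - ε) ∪ Ico (x + ε) b := by
  ext y
  simp only [mem_ofPred_eq, mem_Ioo, mem_union, mem_Ioc, mem_Ico, le_abs]
  constructor
  · rintro ⟨⟨hay, hyb⟩, hleft | hright⟩
    · exact Or.inl ⟨hay, by linarith⟩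
    · exact Or.inr ⟨by linarith, hyb⟩
  · rintro (⟨hay, hyx⟩ | ⟨hxy, hyb⟩)
    · exact ⟨⟨hay, by linarith⟩, Or.inl (by linarith)⟩
    · exact ⟨⟨by linarith, hyb⟩, Or.inr (by linarith)⟩

theorem integral_eq_sub_of_hasDerivAt_of_notMem {u v : ℝ} (huv : u ≤ v) (hau : a ≤ u)
    (hvb : v ≤ b) (hx : x ∉ Icc u v) (hf : ContinuousOn f (Icc a b \ {x}))
    (hF : ContinuousOn F (Icc a b \ {x}))
    (hderiv : ∀ y ∈ Ioo a b, y ≠ x → HasDerivAt F (f y) y) :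
    ∫ y in u..v, f y = F v - F u := by
  have hsub : Icc u v ⊆ Icc a b \ {x} := fun y hy =>
    ⟨Icc_subset_Icc hau hvb hy, fun hyx => hx (hyx ▸ hy)⟩
  refine intervalIntegral.integral_eq_sub_of_hasDerivAt_of_le huv (hF.mono hsub)
    (fun y hy => hderiv y ⟨hau.trans_lt hy.1, hy.2.trans_le hvb⟩ ?_) ?_
  · rintro rfl
    exact hx (Ioo_subset_Icc_self hy)
  · exact (hf.mono hsub).intervalIntegrable_of_Icc huv

theorem setIntegral_le_abs_sub_eq {ε : ℝ} (hε : 0 < ε) (haε : a < x - ε) (hεb : x + ε < b)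
    (hf : ContinuousOn f (Icc a b \ {x})) (hF : ContinuousOn F (Icc a b \ {x}))
    (hderiv : ∀ y ∈ Ioo a b, y ≠ x → HasDerivAt F (f y) y) :
    ∫ y in {y | y ∈ Ioo a b ∧ ε ≤ |x - y|}, f y = F b - F a + (F (x - ε) - F (x + ε)) := by
  have hxε : x ∉ Icc a (x - ε) := fun h => by linarith [h.2]
  have hxε' : x ∉ Icc (x + ε) b := fun h => by linarith [h.1]
  have hleft := integral_eq_sub_of_hasDerivAt_of_notMem haε.le le_rfl (by linarith) hxε hf hF hderiv
  have hright := integral_eq_sub_of_hasDerivAt_of_notMem hεb.le (by linarith) le_rfl hxε' hf hF hderiv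
  have hint : ∀ {u v}, a ≤ u → v ≤ b → x ∉ Icc u v → IntegrableOn f (Icc u v) := fun hau hvb hx =>
    (hf.mono fun y hy => ⟨Icc_subset_Icc hau hvb hy, fun hyx => hx (hyx ▸ hy)⟩).integrableOn_Icc
  have hdisj : Disjoint (Ioc a (x - ε)) (Ico (x + ε) b) :=
    disjoint_left.mpr fun y hl hr => by linarith [hl.2, hr.1]
  rw [setOf_mem_Ioo_and_le_abs_sub (by linarith) (by linarith) hε.le,
    setIntegral_union hdisj measurableSet_Ico
      ((hint le_rfl (by linarith) hxε).mono_set Ioc_subset_Icc_self)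
      ((hint (by linarith) le_rfl hxε').mono_set Ico_subset_Icc_self),
    integral_Ico_eq_integral_Ioc, ← intervalIntegral.integral_of_le haε.le,
    ← intervalIntegral.integral_of_le hεb.le, hleft, hright]
  ring

theorem tendsto_setIntegral_le_abs_sub_of_hasDerivAt (hax : a < x) (hxb : x < b)
    (hf : ContinuousOn f (Icc a b \ {x})) (hF : ContinuousOn F (Icc a b \ {x}))
    (hderiv : ∀ y ∈ Ioo a b, y ≠ x → HasDerivAt F (f y) y)
    (hsymm : Tendsto (fun ε => F (x - ε) - F (x + ε)) (𝓝[>] 0) (𝓝 0)) :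
    Tendsto (fun ε => ∫ y in {y | y ∈ Ioo a b ∧ ε ≤ |x - y|}, f y) (𝓝[>] 0)
      (𝓝 (F b - F a)) := by
  have hlim : Tendsto (fun ε => F b - F a + (F (x - ε) - F (x + ε))) (𝓝[>] 0)
      (𝓝 (F b - F a)) := by
    simpa using tendsto_const_nhds.add hsymm
  refine hlim.congr' ?_
  filter_upwards [Ioo_mem_nhdsGT (lt_min (sub_pos.2 hax) (sub_pos.2 hxb))] with ε ⟨hε, hεmin⟩
  rw [lt_min_iff] at hεmin
  exact (setIntegral_le_abs_sub_eq hε (by linarith) (by linarith) hf hF hderiv).symm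

theorem tendsto_sub_log_sub_symm {G : ℝ → ℝ} (c : ℝ) (hG : ContinuousAt G x) :
    Tendsto (fun ε => (G (x - ε) - c * log (x - (x - ε))) - (G (x + ε) - c * log (x - (x + ε))))
      (𝓝 0) (𝓝 0) := by
  have hleft : Tendsto (fun ε => G (x - ε)) (𝓝 0) (𝓝 (G x)) :=
    hG.tendsto.comp ((continuous_sub_left x).tendsto' 0 x (sub_zero x))
  have hright : Tendsto (fun ε => G (x + ε)) (𝓝 0) (𝓝 (G x)) :=
    hG.tendsto.comp ((continuous_const_add x).tendsto' 0 x (add_zero x))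
  simpa only [sub_sub_cancel, sub_add_cancel_left, log_neg_eq_log, sub_sub_sub_cancel_right,
    sub_self] using hleft.sub hright

end PrincipalValue

noncomputable def sqrtHilbertArg (x y : ℝ) : ℝ := 1 - x * y + √(1 - x ^ 2) * √(1 - y ^ 2)

noncomputable def sqrtHilbertRegular (x y : ℝ) : ℝ :=
  x * arcsin y - √(1 - y ^ 2) + √(1 - x ^ 2) * log (sqrtHilbertArg x y)

noncomputable def sqrtHilbertPrimitive (x y : ℝ) : ℝ :=
  sqrtHilbertRegular x y - √(1 - x ^ 2) * log (x - y)

section SqrtHilbert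

variable {x y : ℝ}

theorem sqrtHilbertArg_pos (hx : x ∈ Ioo (-1) 1) (hy : y ∈ Icc (-1) 1) :
    0 < sqrtHilbertArg x y := by
  obtain ⟨hx1, hx2⟩ := hx
  obtain ⟨hy1, hy2⟩ := hy
  have hxy : |x * y| < 1 := by
    rw [abs_mul]
    exact mul_lt_one_of_nonneg_of_lt_one_left (abs_nonneg x) (abs_lt.2 ⟨hx1, hx2⟩)
      (abs_le.2 ⟨hy1, hy2⟩)
  have : 0 < 1 - x * y := by linarith [le_abs_self (x * y)]
  unfold sqrtHilbertArg
  positivity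

theorem continuousOn_sqrtHilbertRegular (hx : x ∈ Ioo (-1) 1) :
    ContinuousOn (sqrtHilbertRegular x) (Icc (-1) 1) := by
  have harg : ContinuousOn (sqrtHilbertArg x) (Icc (-1) 1) := by
    unfold sqrtHilbertArg; fun_prop
  unfold sqrtHilbertRegular
  have := harg.log fun y hy => (sqrtHilbertArg_pos hx hy).ne'
  fun_prop

theorem continuousOn_sqrtHilbertPrimitive (hx : x ∈ Ioo (-1) 1) :
    ContinuousOn (sqrtHilbertPrimitive x) (Icc (-1) 1 \ {x}) :=
  ((continuousOn_sqrtHilbertRegular hx).mono sdiff_subset).sub <| continuousOn_const.mul <|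
    (continuousOn_const.sub continuousOn_id).log fun _ hy => sub_ne_zero.2 (Ne.symm hy.2)

theorem sqrtHilbertPrimitive_one_sub_neg_one :
    sqrtHilbertPrimitive x 1 - sqrtHilbertPrimitive x (-1) = π * x := by
  simp only [sqrtHilbertPrimitive, sqrtHilbertRegular, sqrtHilbertArg, arcsin_one, arcsin_neg_one]
  norm_num
  rw [show x - 1 = -(1 - x) by ring, log_neg_eq_log, show x + 1 = 1 + x by ring]
  ring

theorem hasDerivAt_sqrtHilbertPrimitive (hx : x ∈ Ioo (-1) 1) (hy : y ∈ Ioo (-1) 1)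
    (hyx : y ≠ x) : HasDerivAt (sqrtHilbertPrimitive x) (√(1 - y ^ 2) / (x - y)) y := by
  obtain ⟨hx1, hx2⟩ := hx
  obtain ⟨hy1, hy2⟩ := hy
  set s := √(1 - y ^ 2) with hs
  set c := √(1 - x ^ 2)
  have hs2 : s ^ 2 = 1 - y ^ 2 := sq_sqrt (by nlinarith)
  have hc2 : c ^ 2 = 1 - x ^ 2 := sq_sqrt (by nlinarith)
  have hs0 : s ≠ 0 := (sqrt_pos.2 (by nlinarith)).ne'
  have hN : sqrtHilbertArg x y ≠ 0 := (sqrtHilbertArg_pos ⟨hx1, hx2⟩ ⟨hy1.le, hy2.le⟩).ne'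
  have hxy : x - y ≠ 0 := sub_ne_zero.2 hyx.symm
  have hsqrt : HasDerivAt (fun y => √(1 - y ^ 2)) (-y / s) y := by
    convert ((hasDerivAt_pow 2 y).const_sub 1).sqrt (by nlinarith) using 1
    rw [← hs]
    field_simp
    push_cast
    ring
  have harg : HasDerivAt (sqrtHilbertArg x) (-x + c * (-y / s)) y := by
    refine ((((hasDerivAt_id y).const_mul x).const_sub 1).add (hsqrt.const_mul c)).congr_deriv ?_
    ring
  have hF := (((hasDerivAt_arcsin hy1.ne' hy2.ne).const_mul x).sub hsqrt).add
    ((harg.log hN).const_mul c) |>.sub ((((hasDerivAt_id y).const_sub x).log hxy).const_mul c)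
  -- collapses the derivative of `c * log (sqrtHilbertArg x y)` to `-c (s - c) / (s (x - y))`
  have key : (x - y) * (x * s + y * c) = (s - c) * sqrtHilbertArg x y := by
    unfold sqrtHilbertArg
    linear_combination s * hc2 - c * hs2
  refine hF.congr_deriv ?_
  rw [id, ← hs]
  field_simp
  linear_combination -c * key + sqrtHilbertArg x y * (hc2 - hs2)

end SqrtHilbert

/-- For `x ∈ (-1,1)`, the principal value `p.v. ∫_{-1}^1 √(1-y²)/(x-y) dy = πx`. -/
theorem pv_integral_sqrt (x : ℝ) (hx : x ∈ Set.Ioo (-1 : ℝ) 1) :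
    Tendsto (fun ε : ℝ =>
        ∫ y in {y : ℝ | y ∈ Set.Ioo (-1 : ℝ) 1 ∧ ε ≤ |x - y|},
          Real.sqrt (1 - y ^ 2) / (x - y))
      (𝓝[>] 0) (𝓝 (Real.pi * x)) := by
  have hf : ContinuousOn (fun y => √(1 - y ^ 2) / (x - y)) (Icc (-1) 1 \ {x}) :=
    ContinuousOn.div (by fun_prop) (by fun_prop) fun y hy => sub_ne_zero.2 (Ne.symm hy.2)
  have hsymm : Tendsto (fun ε => sqrtHilbertPrimitive x (x - ε) - sqrtHilbertPrimitive x (x + ε))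
      (𝓝[>] 0) (𝓝 0) :=
    (tendsto_sub_log_sub_symm _ ((continuousOn_sqrtHilbertRegular hx).continuousAt
      (Icc_mem_nhds hx.1 hx.2))).mono_left nhdsWithin_le_nhds
  rw [← sqrtHilbertPrimitive_one_sub_neg_one]
  exact tendsto_setIntegral_le_abs_sub_of_hasDerivAt hx.1 hx.2 hf
    (continuousOn_sqrtHilbertPrimitive hx) (fun _ => hasDerivAt_sqrtHilbertPrimitive hx) hsymm
end

section
/- Let ψ(z) = ∫_{−1}^1 ln|z−x| √(1−x²) dx for z ∈ (−1,1). Then ψ(z) = πz²/2 − (π/2)(1/2 + ln 2), and consequently ∫_{−1}^1 ∫_{−1}^1 ln|z−x| √(1−x²) √(1−z²) dx dz = (π²/16)(−1 − ln 16). -/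
/-!
With `x = cos θ` and `z = cos φ` the integral `ψ(z)` becomes `∫₀^π log (cos φ - cos θ) sin² θ dθ`
(Mathlib's `log` satisfies `log x = log |x|`, so absolute values can be dropped). The factorisation
`cos φ - cos θ = 2 sin ((θ + φ) / 2) sin ((θ - φ) / 2)` splits the logarithm, and the substitutions
`θ = 2u - φ`, `θ = φ - 2u` turn both halves into integrals of the `π`-periodic function
`log (sin u) sin² (2u - φ)` over two adjacent intervals forming one period. Everything thus reduces
to `∫₀^π log (sin u) · (1, cos 4u, sin 4u) du = (-π log 2, -π/4, 0)`. The double integral follows by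
integrating the quadratic `ψ` against `√(1 - z²)`.
-/

open Real MeasureTheory Set

theorem intervalIntegrable_log_mul_of_analyticAt {f g : ℝ → ℝ} (hf : ∀ x, AnalyticAt ℝ f x)
    (hg : Continuous g) (a b : ℝ) :
    IntervalIntegrable (fun x => log (f x) * g x) volume a b :=
  (AnalyticOnNhd.meromorphicOn fun x _ => hf x).intervalIntegrable_log.mul_continuousOn
    hg.continuousOn

theorem integral_mul_sqrt_one_sub_sq (f : ℝ → ℝ) :
    ∫ x in (-1)..1, f x * √(1 - x ^ 2) = ∫ θ in 0..π, f (cos θ) * sin θ ^ 2 := by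
  have h := integral_image_eq_integral_abs_deriv_smul measurableSet_Icc
    (fun θ _ => (hasDerivAt_cos θ).hasDerivWithinAt) injOn_cos (fun x => f x * √(1 - x ^ 2))
  rw [bijOn_cos.image_eq] at h
  rw [intervalIntegral.integral_of_le (by norm_num), intervalIntegral.integral_of_le pi_pos.le,
    ← integral_Icc_eq_integral_Ioc, ← integral_Icc_eq_integral_Ioc, h]
  refine setIntegral_congr_fun measurableSet_Icc fun θ hθ => ?_
  have hsin : 0 ≤ sin θ := sin_nonneg_of_nonneg_of_le_pi hθ.1 hθ.2
  rw [smul_eq_mul, ← sin_sq, sqrt_sq hsin, abs_neg, abs_of_nonneg hsin]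
  ring

theorem log_cos_sub_cos {φ θ : ℝ} (h : cos θ ≠ cos φ) :
    log (cos φ - cos θ) = log 2 + log (sin ((θ + φ) / 2)) + log (sin ((θ - φ) / 2)) := by
  have hprod : cos φ - cos θ = 2 * sin ((θ + φ) / 2) * sin ((θ - φ) / 2) := by
    rw [cos_sub_cos, show (φ - θ) / 2 = -((θ - φ) / 2) by ring, sin_neg, add_comm φ]
    ring
  have hne : 2 * sin ((θ + φ) / 2) * sin ((θ - φ) / 2) ≠ 0 := hprod ▸ sub_ne_zero.2 h.symm
  rw [hprod, log_mul (left_ne_zero_of_mul hne) (right_ne_zero_of_mul hne),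
    log_mul two_ne_zero (right_ne_zero_of_mul (left_ne_zero_of_mul hne))]

theorem integral_log_sin_mul_sin_four_mul : ∫ u in 0..π, log (sin u) * sin (4 * u) = 0 := by
  have h := intervalIntegral.integral_comp_sub_left (fun u => log (sin u) * sin (4 * u)) π
    (a := 0) (b := π)
  have hodd : ∀ u, log (sin (π - u)) * sin (4 * (π - u)) = -(log (sin u) * sin (4 * u)) := by
    intro u
    rw [sin_pi_sub, show 4 * (π - u) = -(4 * u) + (2 : ℕ) * (2 * π) by push_cast; ring,
      sin_add_nat_mul_two_pi, sin_neg, mul_neg]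
  simp only [hodd, intervalIntegral.integral_neg, sub_self, sub_zero] at h
  linarith

theorem integral_log_sin_mul_cos_four_mul :
    ∫ u in 0..π, log (sin u) * cos (4 * u) = -(π / 4) := by
  set F : ℝ → ℝ := fun u => log (sin u) * sin (4 * u) / 4
    - (u / 4 + sin (2 * u) / 4 + sin (4 * u) / 16)
  have hcont : ContinuousOn F (Icc 0 π) := by
    -- Continuity at the zeros of `sin`: the logarithmic term is a `negMulLog` term in disguise.
    have hF : F = fun u => -(negMulLog (sin u) * cos u * cos (2 * u))
        - (u / 4 + sin (2 * u) / 4 + sin (4 * u) / 16) := by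
      funext u
      simp only [F, negMulLog]
      rw [show 4 * u = 2 * (2 * u) by ring, sin_two_mul (2 * u), sin_two_mul u]
      ring
    rw [hF]
    fun_prop
  have hderiv : ∀ u ∈ Ioo 0 π, HasDerivAt F (log (sin u) * cos (4 * u)) u := by
    intro u hu
    have hs : sin u ≠ 0 := (sin_pos_of_pos_of_lt_pi hu.1 hu.2).ne'
    have hlog := (hasDerivAt_sin u).log hs
    have h4 := ((hasDerivAt_id' u).const_mul 4).sin
    have h2 := ((hasDerivAt_id' u).const_mul 2).sin
    refine (((hlog.mul h4).div_const 4).sub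
      ((((hasDerivAt_id' u).div_const 4).add (h2.div_const 4)).add
        (h4.div_const 16))).congr_deriv ?_
    rw [show 4 * u = 2 * (2 * u) by ring, sin_two_mul (2 * u), cos_two_mul (2 * u), sin_two_mul u,
      cos_two_mul u]
    field_simp
    ring
  rw [intervalIntegral.integral_eq_sub_of_hasDerivAt_of_le pi_pos.le hcont hderiv
    (intervalIntegrable_log_mul_of_analyticAt (fun x => by fun_prop) (by fun_prop) 0 π)]
  simp [F, show sin (4 * π) = 0 by simpa using sin_nat_mul_pi 4]

theorem integral_log_sin_mul_sin_sq_two_mul_sub (φ : ℝ) :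
    ∫ u in 0..π, log (sin u) * sin (2 * u - φ) ^ 2 = π / 8 * cos (2 * φ) - π / 2 * log 2 := by
  have hexpand : ∀ u, log (sin u) * sin (2 * u - φ) ^ 2 = 1 / 2 * log (sin u)
      - cos (2 * φ) / 2 * (log (sin u) * cos (4 * u))
      - sin (2 * φ) / 2 * (log (sin u) * sin (4 * u)) := by
    intro u
    rw [sin_sq_eq_half_sub, show 2 * (2 * u - φ) = 4 * u - 2 * φ by ring, cos_sub]
    ring
  have hlog : IntervalIntegrable (fun u => 1 / 2 * log (sin u)) volume 0 π :=
    intervalIntegrable_log_sin.const_mul _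
  have hint {g : ℝ → ℝ} (hg : Continuous g) (c : ℝ) :
      IntervalIntegrable (fun u => c * (log (sin u) * g u)) volume 0 π :=
    (intervalIntegrable_log_mul_of_analyticAt (fun x => by fun_prop) hg 0 π).const_mul c
  simp_rw [hexpand]
  rw [intervalIntegral.integral_sub (hlog.sub (hint (by fun_prop) _)) (hint (by fun_prop) _),
    intervalIntegral.integral_sub hlog (hint (by fun_prop) _)]
  simp only [intervalIntegral.integral_const_mul, integral_log_sin_zero_pi,
    integral_log_sin_mul_cos_four_mul, integral_log_sin_mul_sin_four_mul]
  ring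

theorem integral_log_sin_half_add_mul_sin_sq (φ : ℝ) :
    ∫ θ in 0..π, log (sin ((θ + φ) / 2)) * sin θ ^ 2
      = 2 * ∫ u in (φ / 2)..((φ - π) / 2 + π), log (sin u) * sin (2 * u - φ) ^ 2 := by
  have h := intervalIntegral.integral_comp_mul_sub
    (fun θ => log (sin ((θ + φ) / 2)) * sin θ ^ 2) two_ne_zero φ
    (a := φ / 2) (b := (φ - π) / 2 + π)
  rw [show 2 * (φ / 2) - φ = 0 by ring, show 2 * ((φ - π) / 2 + π) - φ = π by ring] at h
  simp only [show ∀ u, (2 * u - φ + φ) / 2 = u from fun u => by ring] at h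
  rw [h, smul_eq_mul, mul_inv_cancel_left₀ two_ne_zero]

theorem integral_log_sin_half_sub_mul_sin_sq (φ : ℝ) :
    ∫ θ in 0..π, log (sin ((θ - φ) / 2)) * sin θ ^ 2
      = 2 * ∫ u in ((φ - π) / 2)..(φ / 2), log (sin u) * sin (2 * u - φ) ^ 2 := by
  have h := intervalIntegral.integral_comp_sub_mul
    (fun θ => log (sin ((θ - φ) / 2)) * sin θ ^ 2) two_ne_zero φ
    (a := (φ - π) / 2) (b := φ / 2)
  rw [show φ - 2 * (φ / 2) = 0 by ring, show φ - 2 * ((φ - π) / 2) = π by ring] at h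
  have hG : ∀ u, log (sin ((φ - 2 * u - φ) / 2)) * sin (φ - 2 * u) ^ 2
      = log (sin u) * sin (2 * u - φ) ^ 2 := fun u => by
    rw [show (φ - 2 * u - φ) / 2 = -u by ring, sin_neg, log_neg_eq_log, ← neg_sub, sin_neg, neg_sq]
  simp only [hG] at h
  rw [h, smul_eq_mul, mul_inv_cancel_left₀ two_ne_zero]

theorem integral_log_cos_sub_cos_mul_sin_sq (φ : ℝ) :
    ∫ θ in 0..π, log (cos φ - cos θ) * sin θ ^ 2
      = π * cos φ ^ 2 / 2 - π / 2 * (1 / 2 + log 2) := by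
  set G : ℝ → ℝ := fun u => log (sin u) * sin (2 * u - φ) ^ 2
  have hsplit : ∫ θ in 0..π, log (cos φ - cos θ) * sin θ ^ 2 = ∫ θ in 0..π, (log 2 * sin θ ^ 2
      + log (sin ((θ + φ) / 2)) * sin θ ^ 2 + log (sin ((θ - φ) / 2)) * sin θ ^ 2) := by
    refine intervalIntegral.integral_congr_ae ?_
    filter_upwards [Measure.ae_ne volume (arccos (cos φ))] with θ hθφ hθ
    rw [uIoc_of_le pi_pos.le] at hθ
    have hcos : cos θ ≠ cos φ := fun h => hθφ (by rw [← h, arccos_cos hθ.1.le hθ.2])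
    rw [log_cos_sub_cos hcos]
    ring
  have hG_periodic : Function.Periodic G π := fun u => by
    simp only [G, sin_add_pi, log_neg_eq_log, show 2 * (u + π) - φ = 2 * u - φ + 2 * π by ring,
      sin_add_two_pi]
  have hG_int (a b : ℝ) : IntervalIntegrable G volume a b :=
    intervalIntegrable_log_mul_of_analyticAt (fun x => by fun_prop) (by fun_prop) a b
  have hint₁ : IntervalIntegrable (fun θ => log 2 * sin θ ^ 2) volume 0 π :=
    (by fun_prop : Continuous fun θ => log 2 * sin θ ^ 2).intervalIntegrable 0 π
  have hint₂ : IntervalIntegrable (fun θ => log (sin ((θ + φ) / 2)) * sin θ ^ 2) volume 0 π :=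
    intervalIntegrable_log_mul_of_analyticAt (fun x => by fun_prop) (by fun_prop) 0 π
  have hint₃ : IntervalIntegrable (fun θ => log (sin ((θ - φ) / 2)) * sin θ ^ 2) volume 0 π :=
    intervalIntegrable_log_mul_of_analyticAt (fun x => by fun_prop) (by fun_prop) 0 π
  have hperiod : (∫ u in ((φ - π) / 2)..(φ / 2), G u) + ∫ u in (φ / 2)..((φ - π) / 2 + π), G u
      = π / 8 * (2 * cos φ ^ 2 - 1) - π / 2 * log 2 := by
    rw [intervalIntegral.integral_add_adjacent_intervals (hG_int _ _) (hG_int _ _),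
      hG_periodic.intervalIntegral_add_eq _ 0, zero_add, integral_log_sin_mul_sin_sq_two_mul_sub,
      cos_two_mul]
  rw [hsplit, intervalIntegral.integral_add (hint₁.add hint₂) hint₃,
    intervalIntegral.integral_add hint₁ hint₂, integral_log_sin_half_add_mul_sin_sq,
    integral_log_sin_half_sub_mul_sin_sq, intervalIntegral.integral_const_mul, integral_sin_sq]
  simp only [sin_zero, sin_pi, zero_mul, sub_zero, sub_self, zero_add]
  linear_combination 2 * hperiod

theorem integral_log_abs_sub_mul_sqrt_one_sub_sq {z : ℝ} (hz : z ∈ Icc (-1) 1) :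
    ∫ x in (-1)..1, log |z - x| * √(1 - x ^ 2) = π * z ^ 2 / 2 - π / 2 * (1 / 2 + log 2) := by
  rw [integral_mul_sqrt_one_sub_sq (fun x => log |z - x|)]
  simp only [log_abs]
  rw [← cos_arccos hz.1 hz.2]
  exact integral_log_cos_sub_cos_mul_sin_sq _

/-- `ψ(z) = ∫_{-1}^1 ln|z-x| √(1-x²) dx = πz²/2 - (π/2)(1/2 + ln 2)` for `z ∈ (-1,1)`,
and the double integral `∬ ln|z-x| √(1-x²)√(1-z²) dx dz = (π²/16)(-1 - ln 16)`. -/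
theorem psi_formula_and_double_integral :
    (∀ z ∈ Set.Ioo (-1 : ℝ) 1,
      (∫ x in (-1 : ℝ)..1, Real.log |z - x| * Real.sqrt (1 - x ^ 2))
        = Real.pi * z ^ 2 / 2 - (Real.pi / 2) * (1 / 2 + Real.log 2)) ∧
    (∫ z in (-1 : ℝ)..1, ∫ x in (-1 : ℝ)..1,
        Real.log |z - x| * Real.sqrt (1 - x ^ 2) * Real.sqrt (1 - z ^ 2))
      = Real.pi ^ 2 / 16 * (-1 - Real.log 16) := by
  refine ⟨fun z hz => integral_log_abs_sub_mul_sqrt_one_sub_sq (Ioo_subset_Icc_self hz), ?_⟩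
  set c := π / 2 * (1 / 2 + log 2)
  calc (∫ z in (-1 : ℝ)..1, ∫ x in (-1 : ℝ)..1, log |z - x| * √(1 - x ^ 2) * √(1 - z ^ 2))
      = ∫ z in (-1 : ℝ)..1, (π * z ^ 2 / 2 - c) * √(1 - z ^ 2) :=
        intervalIntegral.integral_congr fun z hz => by
          rw [intervalIntegral.integral_mul_const, integral_log_abs_sub_mul_sqrt_one_sub_sq
            (by rwa [uIcc_of_le (by norm_num)] at hz)]
    _ = ∫ θ in 0..π, (π / 2 * (sin θ ^ 2 * cos θ ^ 2) - c * sin θ ^ 2) :=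
        (integral_mul_sqrt_one_sub_sq fun z => π * z ^ 2 / 2 - c).trans
          (intervalIntegral.integral_congr fun θ _ => by ring)
    _ = π ^ 2 / 16 * (-1 - log 16) := by
      rw [intervalIntegral.integral_sub (Continuous.intervalIntegrable (by fun_prop) _ _)
        (Continuous.intervalIntegrable (by fun_prop) _ _), intervalIntegral.integral_const_mul,
        intervalIntegral.integral_const_mul, integral_sin_sq_mul_cos_sq, integral_sin_sq,
        show (16 : ℝ) = 2 ^ 4 by norm_num, log_pow]
      simp [c, show sin (4 * π) = 0 by simpa using sin_nat_mul_pi 4]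
      ring
end

section
/- ∫_0^∞ J₀(r) dr = 1, where J₀ is the Bessel function of the first kind of order 0 and the integral is an improper Riemann integral. -/
/-!
Fubini turns `∫_0^R J₀` into `(1/π) ∫_0^π sin (R sin θ) / sin θ dθ`, and by symmetry and
the substitution `u = sin θ` this is `(2/π) ∫_0^1 sin (R u) / (u √(1 - u²)) du`. Subtracting
`sin (R u) / u` leaves `sin (R u)` times a function integrable on `(0, 1)`, whose integral
tends to `0` by the Riemann–Lebesgue lemma, while
`∫_0^1 sin (R u) / u du = ∫_0^R sin t / t dt`.
This Dirichlet integral tends to `π/2`: at `R = (2n+1)π/2`, writing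
`1/u = 1/sin u + (1/u - 1/sin u)` on `(0, π/2]` splits it into the Dirichlet kernel integral
`∫_0^{π/2} sin ((2n+1)u) / sin u du = π/2` and another Riemann–Lebesgue term; between
consecutive such points it moves by `O(1/R)`.
-/

open Filter Topology intervalIntegral

/-- The Bessel function of the first kind of order `0`,
`J₀(r) = (1/π) ∫_0^π cos(r sin θ) dθ`. -/
noncomputable def besselJ0 (r : ℝ) : ℝ :=
  (1 / Real.pi) * ∫ θ in (0 : ℝ)..Real.pi, Real.cos (r * Real.sin θ)

open MeasureTheory Real Set

theorem tendsto_integral_sin_mul_of_integrable {g : ℝ → ℝ} (hg : Integrable g) :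
    Tendsto (fun R : ℝ => ∫ u, sin (R * u) * g u) atTop (𝓝 0) := by
  -- `∫ sin (R u) g u` is the imaginary part of the Fourier transform of `g` at `-R / (2π)`.
  have hscale : Tendsto (fun R : ℝ => -R / (2 * π)) atTop (cocompact ℝ) := by
    rw [cocompact_eq_atBot_atTop]
    exact (tendsto_neg_atTop_atBot.atBot_div_const (by positivity)).mono_right le_sup_left
  have hF := (Complex.continuous_im.tendsto 0).comp
    ((Real.zero_at_infty_fourier fun u => (g u : ℂ)).comp hscale)
  rw [Complex.zero_im] at hF
  refine hF.congr fun R => ?_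
  rw [Function.comp_apply, Function.comp_apply, Real.fourier_real_eq_integral_exp_smul,
    ← Complex.imCLM_apply, ← ContinuousLinearMap.integral_comp_comm]
  · congr 1 with u
    have : -2 * π * u * (-R / (2 * π)) = R * u := by field_simp
    rw [this, smul_eq_mul, Complex.imCLM_apply, Complex.im_mul_ofReal,
      Complex.exp_ofReal_mul_I_im]
  · refine hg.ofReal.bdd_mul (c := 1) (by fun_prop) (.of_forall fun u => ?_)
    rw [Complex.norm_exp_ofReal_mul_I]

theorem tendsto_setIntegral_sin_mul {g : ℝ → ℝ} {s : Set ℝ} (hs : MeasurableSet s)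
    (hg : IntegrableOn g s) :
    Tendsto (fun R : ℝ => ∫ u in s, sin (R * u) * g u) atTop (𝓝 0) := by
  refine (tendsto_integral_sin_mul_of_integrable ((integrable_indicator_iff hs).2 hg)).congr
    fun R => ?_
  simp only [← MeasureTheory.integral_indicator hs, indicator_mul_right]

theorem abs_sin_mul_div_le (c x : ℝ) : |sin (c * x) / x| ≤ |c| := by
  rcases eq_or_ne x 0 with rfl | hx
  · simp
  · rw [abs_div, div_le_iff₀ (abs_pos.2 hx), ← abs_mul]
    exact abs_sin_le_abs

theorem intervalIntegrable_sin_mul_comp_div (c : ℝ) {φ : ℝ → ℝ} (hφ : Measurable φ)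
    (a b : ℝ) : IntervalIntegrable (fun x => sin (c * φ x) / φ x) volume a b :=
  (intervalIntegrable_const (c := |c|)).mono_fun
    ((measurable_sin.comp (hφ.const_mul c)).div hφ).aestronglyMeasurable
    (.of_forall fun x => by simpa only [norm_eq_abs, abs_abs] using abs_sin_mul_div_le c (φ x))

theorem intervalIntegrable_sin_mul_div (c a b : ℝ) :
    IntervalIntegrable (fun x => sin (c * x) / x) volume a b :=
  intervalIntegrable_sin_mul_comp_div c measurable_id a b

noncomputable def sinIntegral (x : ℝ) : ℝ := ∫ t in 0..x, sin t / t

theorem integral_sin_mul_div (c a : ℝ) :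
    ∫ x in 0..a, sin (c * x) / x = sinIntegral (c * a) := by
  rcases eq_or_ne c 0 with rfl | hc
  · simp [sinIntegral]
  have : (fun x => sin (c * x) / x) = fun x => c * (sin (c * x) / (c * x)) := by
    ext x
    rcases eq_or_ne x 0 with rfl | hx
    · simp
    · field_simp
  rw [this, intervalIntegral.integral_const_mul, integral_comp_mul_left (fun t => sin t / t) hc,
    mul_zero, smul_eq_mul, mul_inv_cancel_left₀ hc, sinIntegral]

theorem abs_sinIntegral_sub_le {a b : ℝ} (ha : 0 < a) (hab : a ≤ b) :
    |sinIntegral b - sinIntegral a| ≤ (b - a) / a := by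
  have hint (x y : ℝ) : IntervalIntegrable (fun t => sin t / t) volume x y := by
    simpa only [one_mul] using intervalIntegrable_sin_mul_div 1 x y
  rw [sinIntegral, sinIntegral, integral_interval_sub_left (hint 0 b) (hint 0 a), ← norm_eq_abs,
    div_eq_inv_mul, ← abs_of_nonneg (sub_nonneg.2 hab)]
  refine norm_integral_le_of_norm_le_const fun x hx => ?_
  rw [uIoc_of_le hab] at hx
  have hx0 : 0 < x := ha.trans hx.1
  rw [norm_div, norm_eq_abs, norm_of_nonneg hx0.le, div_le_iff₀ hx0]
  calc |sin x| ≤ 1 := abs_sin_le_one x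
    _ ≤ a⁻¹ * x := by rw [inv_mul_eq_div, le_div_iff₀ ha, one_mul]; exact hx.1.le

theorem abs_inv_sub_inv_sin_le {u : ℝ} (hu : u ∈ Ioc 0 (π / 2)) :
    |u⁻¹ - (sin u)⁻¹| ≤ 1 := by
  obtain ⟨hu0, huπ⟩ := hu
  have hsin : 2 / π * u ≤ sin u := mul_le_sin hu0.le huπ
  have hsin0 : 0 < sin u := (by positivity : 0 < 2 / π * u).trans_le hsin
  have hu2 : u ≤ 2 := huπ.trans (by linarith [pi_lt_four])
  have hπ : 1 / 2 ≤ 2 / π := by rw [div_le_div_iff₀ two_pos pi_pos]; linarith [pi_lt_four]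
  have hcube : u - u ^ 3 / 6 < sin u := sin_gt_sub_cube hu0
  rw [abs_sub_comm, abs_of_nonneg (sub_nonneg.2 (inv_anti₀ hsin0 (sin_lt hu0).le)),
    inv_sub_inv hsin0.ne' hu0.ne', div_le_one (by positivity)]
  nlinarith [mul_le_mul_of_nonneg_right hsin hu0.le, mul_le_mul_of_nonneg_right hπ (sq_nonneg u)]

theorem intervalIntegrable_inv_sub_inv_sin :
    IntervalIntegrable (fun u => u⁻¹ - (sin u)⁻¹) volume 0 (π / 2) := by
  rw [intervalIntegrable_iff_integrableOn_Ioc_of_le (by positivity)]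
  refine Measure.integrableOn_of_bounded (M := 1) measure_Ioc_lt_top.ne (by fun_prop) ?_
  filter_upwards [ae_restrict_mem measurableSet_Ioc] with u hu
  exact abs_inv_sub_inv_sin_le hu

theorem intervalIntegrable_sin_mul_div_sin (c : ℝ) :
    IntervalIntegrable (fun u => sin (c * u) / sin u) volume 0 (π / 2) := by
  convert (intervalIntegrable_sin_mul_div c 0 (π / 2)).sub
    (intervalIntegrable_inv_sub_inv_sin.continuousOn_mul (g := fun u => sin (c * u))
      (by fun_prop)) using 2 with u
  ring

theorem sinIntegral_mul_pi_div_two (c : ℝ) :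
    sinIntegral (c * (π / 2)) = (∫ u in 0..π / 2, sin (c * u) / sin u) +
      ∫ u in Ioc 0 (π / 2), sin (c * u) * (u⁻¹ - (sin u)⁻¹) := by
  rw [← integral_sin_mul_div, ← integral_of_le (by positivity), ← integral_add
    (intervalIntegrable_sin_mul_div_sin c)
    (intervalIntegrable_inv_sub_inv_sin.continuousOn_mul (by fun_prop))]
  congr 1 with u
  ring

theorem integral_sin_odd_mul_div_sin (n : ℕ) :
    ∫ u in 0..π / 2, sin ((2 * n + 1) * u) / sin u = π / 2 := by
  have hsin {u : ℝ} (hu : u ∈ uIoo 0 (π / 2)) : sin u ≠ 0 := by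
    rw [uIoo_of_le (by positivity)] at hu
    exact (sin_pos_of_pos_of_lt_pi hu.1 (by linarith [hu.2, pi_pos])).ne'
  induction n with
  | zero =>
    rw [integral_congr_uIoo (g := fun _ => 1) fun u hu => by simp [hsin hu]]
    simp
  | succ n ih =>
    have hstep : EqOn (fun u => sin ((2 * n + 1) * u) / sin u + 2 * cos ((2 * n + 2) * u))
        (fun u => sin ((2 * (n + 1 : ℕ) + 1) * u) / sin u) (uIoo 0 (π / 2)) := by
      intro u hu
      simp only [div_add' _ _ _ (hsin hu), div_left_inj' (hsin hu)]
      have h₁ : (2 * n + 1) * u = (2 * n + 2) * u - u := by ring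
      have h₂ : (2 * (n + 1 : ℕ) + 1) * u = (2 * n + 2) * u + u := by push_cast; ring
      rw [h₁, h₂, sin_sub, sin_add]
      ring
    rw [← integral_congr_uIoo hstep, integral_add (intervalIntegrable_sin_mul_div_sin _)
      (Continuous.intervalIntegrable (by fun_prop) _ _), ih,
      add_eq_left, intervalIntegral.integral_const_mul, integral_comp_mul_left cos (by positivity),
      integral_cos, mul_zero, sin_zero, sub_zero,
      show (2 * n + 2) * (π / 2) = (n + 1 : ℕ) * π by push_cast; ring, sin_nat_mul_pi]
    simp

theorem tendsto_two_mul_natCast_add_one_atTop :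
    Tendsto (fun n : ℕ => (2 * n + 1 : ℝ)) atTop atTop :=
  tendsto_atTop_add_const_right _ 1 (tendsto_natCast_atTop_atTop.const_mul_atTop two_pos)

theorem tendsto_sinIntegral_odd_mul_pi_div_two :
    Tendsto (fun n : ℕ => sinIntegral ((2 * n + 1) * (π / 2))) atTop (𝓝 (π / 2)) := by
  have hv : IntegrableOn (fun u => u⁻¹ - (sin u)⁻¹) (Ioc 0 (π / 2)) :=
    (intervalIntegrable_iff_integrableOn_Ioc_of_le (by positivity)).1
      intervalIntegrable_inv_sub_inv_sin
  have hRL := ((tendsto_setIntegral_sin_mul measurableSet_Ioc hv).comp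
    tendsto_two_mul_natCast_add_one_atTop).const_add (π / 2)
  rw [add_zero] at hRL
  refine hRL.congr fun n => ?_
  rw [Function.comp_apply, sinIntegral_mul_pi_div_two, integral_sin_odd_mul_div_sin]

theorem tendsto_sinIntegral : Tendsto sinIntegral atTop (𝓝 (π / 2)) := by
  -- `a R` is the odd multiple of `π / 2` with `a R ≤ R < a R + π`.
  set N : ℝ → ℕ := fun R => ⌊R / π - 1 / 2⌋₊
  set a : ℝ → ℝ := fun R => (2 * N R + 1) * (π / 2)
  have hN : Tendsto N atTop atTop := tendsto_nat_floor_atTop.comp <|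
    tendsto_atTop_add_const_right _ _ (tendsto_id.atTop_div_const pi_pos)
  have ha : Tendsto a atTop atTop :=
    (tendsto_two_mul_natCast_add_one_atTop.comp hN).atTop_mul_const (by positivity)
  have hclose : ∀ᶠ R in atTop, ‖sinIntegral R - sinIntegral (a R)‖ ≤ π / a R := by
    filter_upwards [eventually_ge_atTop (π / 2)] with R hR
    have ha0 : 0 < a R := by positivity
    have hN_le : ((N R : ℝ) + 1 / 2) * π ≤ R := by
      refine (le_div_iff₀ pi_pos).1 ?_
      have : (N R : ℝ) ≤ R / π - 1 / 2 :=
        Nat.floor_le (sub_nonneg.2 ((le_div_iff₀ pi_pos).2 (by linarith)))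
      linarith
    have hN_gt : R < ((N R : ℝ) + 3 / 2) * π := by
      refine (div_lt_iff₀ pi_pos).1 ?_
      have : R / π - 1 / 2 < N R + 1 := Nat.lt_floor_add_one _
      linarith
    have haR : a R ≤ R := by simp only [a]; linarith
    have hRa : R - a R ≤ π := by simp only [a]; linarith
    calc ‖sinIntegral R - sinIntegral (a R)‖ ≤ (R - a R) / a R :=
          abs_sinIntegral_sub_le ha0 haR
      _ ≤ π / a R := by gcongr
  have hdiff : Tendsto (fun R => sinIntegral R - sinIntegral (a R)) atTop (𝓝 0) :=
    squeeze_zero_norm' hclose (tendsto_const_nhds.div_atTop ha)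
  have hsum := (tendsto_sinIntegral_odd_mul_pi_div_two.comp hN).add hdiff
  rw [add_zero] at hsum
  exact hsum.congr fun R => add_sub_cancel _ _

theorem integral_cos_mul_right (R : ℝ) {s : ℝ} (hs : s ≠ 0) :
    ∫ r in 0..R, cos (r * s) = sin (R * s) / s := by
  rw [integral_comp_mul_right cos hs, integral_cos, zero_mul, sin_zero, sub_zero, smul_eq_mul,
    inv_mul_eq_div]

theorem integral_besselJ0_eq (R : ℝ) :
    ∫ r in 0..R, besselJ0 r = 1 / π * ∫ θ in 0..π, sin (R * sin θ) / sin θ := by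
  simp only [besselJ0]
  have hint : IntegrableOn (Function.uncurry fun r θ => cos (r * sin θ))
      (uIoc 0 R ×ˢ uIoc 0 π) :=
    (Continuous.continuousOn (by fun_prop)).integrableOn_compact
      (isCompact_uIcc.prod isCompact_uIcc)
      |>.mono_set (prod_mono uIoc_subset_uIcc uIoc_subset_uIcc)
  rw [intervalIntegral.integral_const_mul, intervalIntegral_intervalIntegral_swap hint]
  congr 1
  refine integral_congr_uIoo fun θ hθ => ?_
  rw [uIoo_of_le pi_pos.le] at hθ
  exact integral_cos_mul_right R (sin_pos_of_pos_of_lt_pi hθ.1 hθ.2).ne'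

theorem integral_comp_sin_eq_two_mul {f : ℝ → ℝ}
    (hf : IntervalIntegrable (fun θ => f (sin θ)) volume 0 π) :
    ∫ θ in 0..π, f (sin θ) = 2 * ∫ θ in 0..π / 2, f (sin θ) := by
  have hsub : uIcc 0 (π / 2) ⊆ uIcc 0 π ∧ uIcc (π / 2) π ⊆ uIcc 0 π := by
    constructor <;> apply uIcc_subset_uIcc <;> simp [pi_pos.le, pi_div_two_pos.le]
  have hreflect : ∫ θ in π / 2..π, f (sin θ) = ∫ θ in 0..π / 2, f (sin θ) := by
    simpa [sin_pi_sub, show π - π / 2 = π / 2 by ring] using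
      (integral_comp_sub_left (fun θ => f (sin θ)) π (a := 0) (b := π / 2)).symm
  rw [← integral_add_adjacent_intervals (hf.mono_set hsub.1) (hf.mono_set hsub.2), hreflect]
  ring

theorem arcsin_image_Ioo_zero_one : arcsin '' Ioo 0 1 = Ioo 0 (π / 2) := by
  ext θ
  constructor
  · rintro ⟨u, hu, rfl⟩
    exact ⟨arcsin_pos.2 hu.1, arcsin_lt_pi_div_two.2 hu.2⟩
  · intro hθ
    refine ⟨sin θ, ⟨sin_pos_of_pos_of_lt_pi hθ.1 (by linarith [hθ.2, pi_pos]), ?_⟩,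
      arcsin_sin (by linarith [hθ.1, pi_pos]) hθ.2.le⟩
    simpa using sin_lt_sin_of_lt_of_le_pi_div_two (by linarith [hθ.1, pi_pos]) le_rfl hθ.2

theorem integral_comp_sin_eq_integral_div_sqrt (f : ℝ → ℝ) :
    ∫ θ in 0..π / 2, f (sin θ) = ∫ u in 0..1, f u / √(1 - u ^ 2) := by
  have hinj : InjOn arcsin (Ioo 0 1) :=
    injOn_arcsin.mono <| Ioo_subset_Icc_self.trans <| Icc_subset_Icc (by norm_num) le_rfl
  have hderiv (u : ℝ) (hu : u ∈ Ioo 0 1) :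
      HasDerivWithinAt arcsin (1 / √(1 - u ^ 2)) (Ioo 0 1) u :=
    (hasDerivAt_arcsin (by linarith [hu.1]) hu.2.ne).hasDerivWithinAt
  rw [integral_of_le (by positivity), integral_of_le zero_le_one, integral_Ioc_eq_integral_Ioo,
    integral_Ioc_eq_integral_Ioo, ← arcsin_image_Ioo_zero_one,
    integral_image_eq_integral_abs_deriv_smul measurableSet_Ioo hderiv hinj]
  refine setIntegral_congr_fun measurableSet_Ioo fun u hu => ?_
  rw [sin_arcsin (by linarith [hu.1]) hu.2.le, abs_of_nonneg (by positivity), smul_eq_mul]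
  ring

theorem integrableOn_inv_mul_sqrt_sub_inv :
    IntegrableOn (fun u => (u * √(1 - u ^ 2))⁻¹ - u⁻¹) (Ioc 0 1) := by
  have hdom : IntegrableOn (fun u => (√(1 - u ^ 2))⁻¹) (Ioo 0 1) := by
    have := Polynomial.Chebyshev.intervalIntegrable_sqrt_one_sub_sq_inv
    rw [intervalIntegrable_iff_integrableOn_Ioc_of_le (by norm_num)] at this
    simpa only [sqrt_inv] using
      this.mono_set (Ioo_subset_Ioc_self.trans (Ioc_subset_Ioc_left (by norm_num)))
  rw [integrableOn_Ioc_iff_integrableOn_Ioo]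
  refine hdom.mono' (by fun_prop) ?_
  filter_upwards [ae_restrict_mem measurableSet_Ioo] with u ⟨hu0, hu1⟩
  set s := √(1 - u ^ 2)
  have hs : 0 < s := sqrt_pos.2 (by nlinarith)
  have hs1 : s ≤ 1 := sqrt_le_one.2 (by nlinarith)
  have hsq : s ^ 2 = 1 - u ^ 2 := sq_sqrt (by nlinarith)
  have hw : (u * s)⁻¹ - u⁻¹ = (1 - s) / u * s⁻¹ := by field_simp
  rw [hw, norm_mul, norm_of_nonneg (div_nonneg (by linarith) hu0.le),
    norm_of_nonneg (inv_nonneg.2 hs.le)]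
  exact mul_le_of_le_one_left (inv_nonneg.2 hs.le) ((div_le_one hu0).2 (by nlinarith))

theorem integral_sin_mul_div_div_sqrt (R : ℝ) :
    ∫ u in 0..1, sin (R * u) / u / √(1 - u ^ 2) =
      sinIntegral R + ∫ u in Ioc 0 1, sin (R * u) * ((u * √(1 - u ^ 2))⁻¹ - u⁻¹) := by
  have hw := (intervalIntegrable_iff_integrableOn_Ioc_of_le zero_le_one).2
    integrableOn_inv_mul_sqrt_sub_inv
  rw [← mul_one R, ← integral_sin_mul_div, mul_one, ← integral_of_le zero_le_one,
    ← integral_add (intervalIntegrable_sin_mul_div R 0 1)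
      (hw.continuousOn_mul (by fun_prop))]
  congr 1 with u
  ring

/-- `∫_0^∞ J₀(r) dr = 1` as an improper Riemann integral. -/
theorem integral_besselJ0 :
    Tendsto (fun R : ℝ => ∫ r in (0 : ℝ)..R, besselJ0 r) atTop (𝓝 1) := by
  have hlim := (tendsto_sinIntegral.add (tendsto_setIntegral_sin_mul measurableSet_Ioc
    integrableOn_inv_mul_sqrt_sub_inv)).const_mul (2 / π)
  rw [add_zero, show 2 / π * (π / 2) = 1 by field_simp] at hlim
  refine hlim.congr fun R => ?_
  rw [integral_besselJ0_eq, integral_comp_sin_eq_two_mul (f := fun u => sin (R * u) / u)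
    (intervalIntegrable_sin_mul_comp_div R measurable_sin 0 π),
    integral_comp_sin_eq_integral_div_sqrt (fun u => sin (R * u) / u),
    integral_sin_mul_div_div_sqrt]
  ring
end

section
/- Let α > 0, let β ∈ (π/α, √3·π/α), and let ω ∈ ℂ \ [π²/α², ∞) with |ω − π²/α²| sufficiently small. Then among the poles ±i√(k²π²/α² − ω), k ∈ ℕ, of the meromorphic function m_ω, exactly two (namely ±i√(π²/α² − ω)) lie inside the horizontal strip {z ∈ ℂ : |Im z| ≤ β}. -/
open Complex

/-- The pole `i√(k²π²/α² - ω)` of the meromorphic function `m_ω`. -/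
noncomputable def mPole (α : ℝ) (ω : ℂ) (k : ℕ) : ℂ :=
  Complex.I * csqrt ((((k : ℝ) ^ 2 * Real.pi ^ 2 / α ^ 2 : ℝ) : ℂ) - ω)

/-! The imaginary part of the pole `i√w`, `w = k²π²/α² - ω`, is `Re √w = √((|w| + Re w)/2)`,
which lies between `√(Re w)` and `√|w|`. For `k = 1` the number `w` is small, so the pole
lies within `√ε` of the origin, inside the strip. For `k ≥ 2`,
`Re w ≥ 4π²/α² - Re ω > β²` as soon as `ε < 3π²/α² - β²`, which is possible because
`β < √3 π/α`. Finally `ω ∉ [π²/α², ∞)` makes the first pole nonzero, so `±` give two poles. -/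

lemma csqrt_re (z : ℂ) : (csqrt z).re = Real.sqrt ((‖z‖ + z.re) / 2) := by
  rw [csqrt, one_div, Complex.cpow_inv_two_re]

lemma csqrt_re_nonneg (z : ℂ) : 0 ≤ (csqrt z).re := by
  rw [csqrt_re]
  exact Real.sqrt_nonneg _

lemma csqrt_re_le_sqrt_norm (z : ℂ) : (csqrt z).re ≤ Real.sqrt ‖z‖ := by
  rw [csqrt_re]
  exact Real.sqrt_le_sqrt (by linarith [Complex.re_le_norm z])

lemma sqrt_re_le_csqrt_re (z : ℂ) : Real.sqrt z.re ≤ (csqrt z).re := by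
  rw [csqrt_re]
  exact Real.sqrt_le_sqrt (by linarith [Complex.re_le_norm z])

lemma csqrt_ne_zero {z : ℂ} (hz : z ≠ 0) : csqrt z ≠ 0 := by
  simp [csqrt, Complex.cpow_eq_zero_iff, hz]

lemma mPole_one (α : ℝ) (ω : ℂ) :
    mPole α ω 1 = Complex.I * csqrt (((Real.pi ^ 2 / α ^ 2 : ℝ) : ℂ) - ω) := by
  simp [mPole]

lemma mPole_im (α : ℝ) (ω : ℂ) (k : ℕ) :
    (mPole α ω k).im = (csqrt ((((k : ℝ) ^ 2 * Real.pi ^ 2 / α ^ 2 : ℝ) : ℂ) - ω)).re := by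
  simp [mPole]

lemma abs_im_mPole_one_le (α : ℝ) (ω : ℂ) :
    |(mPole α ω 1).im| ≤ Real.sqrt ‖ω - ((Real.pi ^ 2 / α ^ 2 : ℝ) : ℂ)‖ := by
  rw [mPole_one, mul_comm, Complex.mul_I_im, abs_of_nonneg (csqrt_re_nonneg _), ← norm_neg,
    neg_sub]
  exact csqrt_re_le_sqrt_norm _

lemma sqrt_le_im_mPole (α : ℝ) (ω : ℂ) (k : ℕ) :
    Real.sqrt ((k : ℝ) ^ 2 * (Real.pi ^ 2 / α ^ 2) - ω.re) ≤ (mPole α ω k).im := by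
  rw [mPole_im]
  convert sqrt_re_le_csqrt_re _ using 2
  simp only [Complex.sub_re, Complex.ofReal_re]
  ring

lemma mPole_one_ne_neg_mPole_one {α : ℝ} {ω : ℂ}
    (hω : ω ≠ ((Real.pi ^ 2 / α ^ 2 : ℝ) : ℂ)) : mPole α ω 1 ≠ -mPole α ω 1 := by
  have hpole : mPole α ω 1 ≠ 0 := by
    rw [mPole_one]
    exact mul_ne_zero Complex.I_ne_zero (csqrt_ne_zero (sub_ne_zero.mpr hω.symm))
  intro h
  exact hpole (by linear_combination h / 2)

lemma poles_inter_strip_eq {p : ℕ → ℂ} {β : ℝ} (h₁ : |(p 1).im| ≤ β)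
    (h₂ : ∀ k, 2 ≤ k → β < |(p k).im|) :
    {z : ℂ | ∃ k : ℕ, 1 ≤ k ∧ (z = p k ∨ z = -p k)} ∩ {z : ℂ | |z.im| ≤ β} = {p 1, -p 1} := by
  ext z
  simp only [Set.mem_inter_iff, Set.mem_ofPred_eq, Set.mem_insert_iff, Set.mem_singleton_iff]
  constructor
  · rintro ⟨⟨k, hk, hz⟩, hstrip⟩
    obtain rfl | hk := hk.eq_or_lt
    · exact hz
    · rcases hz with rfl | rfl
      · exact absurd hstrip (h₂ k hk).not_ge
      · rw [Complex.neg_im, abs_neg] at hstrip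
        exact absurd hstrip (h₂ k hk).not_ge
  · rintro (rfl | rfl)
    · exact ⟨⟨1, le_rfl, Or.inl rfl⟩, h₁⟩
    · exact ⟨⟨1, le_rfl, Or.inr rfl⟩, by rwa [Complex.neg_im, abs_neg]⟩

/-- For `β ∈ (π/α, √3 π/α)` and `ω ∉ [π²/α², ∞)` with `|ω - π²/α²|` sufficiently small,
exactly the two poles `±i√(π²/α² - ω)` among `±i√(k²π²/α² - ω)`, `k ≥ 1`, lie in the
horizontal strip `{|Im z| ≤ β}`. -/
theorem exactly_two_poles_in_strip (α β : ℝ) (hα : 0 < α)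
    (hβ : β ∈ Set.Ioo (Real.pi / α) (Real.sqrt 3 * Real.pi / α)) :
    ∃ ε > 0, ∀ ω : ℂ, ω ∉ {z : ℂ | z.im = 0 ∧ (Real.pi ^ 2 / α ^ 2 : ℝ) ≤ z.re} →
      ‖ω - ((Real.pi ^ 2 / α ^ 2 : ℝ) : ℂ)‖ < ε →
      ({z : ℂ | ∃ k : ℕ, 1 ≤ k ∧ (z = mPole α ω k ∨ z = -mPole α ω k)} ∩
          {z : ℂ | |z.im| ≤ β}
        = {mPole α ω 1, -mPole α ω 1}) ∧
      mPole α ω 1 ≠ -mPole α ω 1 := by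
  obtain ⟨hβ₁, hβ₂⟩ := hβ
  set c : ℝ := Real.pi ^ 2 / α ^ 2
  have hc₀ : 0 < c := by positivity
  have hβ₀ : 0 < β := (div_pos Real.pi_pos hα).trans hβ₁
  have hβc : β ^ 2 < 3 * c := by
    calc β ^ 2 < (Real.sqrt 3 * Real.pi / α) ^ 2 := by gcongr
      _ = 3 * c := by rw [div_pow, mul_pow, Real.sq_sqrt zero_le_three]; ring
  refine ⟨min (β ^ 2) (3 * c - β ^ 2), lt_min (by positivity) (by linarith), ?_⟩
  intro ω hω hnear
  obtain ⟨hnearβ, hnearc⟩ := lt_min_iff.mp hnear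
  refine ⟨poles_inter_strip_eq ?_ fun k hk => ?_, mPole_one_ne_neg_mPole_one ?_⟩
  · calc |(mPole α ω 1).im| ≤ Real.sqrt ‖ω - (c : ℂ)‖ := abs_im_mPole_one_le α ω
      _ ≤ Real.sqrt (β ^ 2) := Real.sqrt_le_sqrt hnearβ.le
      _ = β := Real.sqrt_sq hβ₀.le
  · have hk4 : (4 : ℝ) ≤ (k : ℝ) ^ 2 := by
      have : (2 : ℝ) ≤ k := by exact_mod_cast hk
      nlinarith
    have hre : ω.re - c < 3 * c - β ^ 2 := by
      simpa using (Complex.re_le_norm (ω - c)).trans_lt hnearc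
    have hβk : β < Real.sqrt ((k : ℝ) ^ 2 * c - ω.re) :=
      (Real.lt_sqrt hβ₀.le).mpr (by nlinarith)
    exact hβk.trans_le ((sqrt_le_im_mPole α ω k).trans (le_abs_self _))
  · rintro rfl
    exact hω ⟨Complex.ofReal_im c, (Complex.ofReal_re c).ge⟩
end
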